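/- If Z satisfies Zᵀ𝐀Z ⪯ 𝐐 with 𝐀 ≻ 0 and 𝐐 ⪰ 0, then Z can be written as Z = 𝐀^{-1/2} 𝚼 𝐐^{1/2} for some matrix 𝚼 with 𝚼ᵀ𝚼 ⪯ I. -/

import Mathlib

/-!
Put `R = 𝐀^{1/2}`, `S = 𝐐^{1/2}` and `B = R Z`, so that the hypothesis reads `BᵀB ⪯ S²`.
Let `T` be the pseudoinverse of `S` and `P = S T` the orthogonal projection onto the range
of `S`. Compressing `S² - BᵀB ⪰ 0` by `1 - P` gives `-(B (1 - P))ᵀ (B (1 - P)) ⪰ 0`, so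
`B = B P = (B T) S`; and `1 - T BᵀB T = (1 - P) + T (S² - BᵀB) T ⪰ 0`. Hence `𝚼 = B T` works,
and `Z = R⁻¹ 𝚼 S`.
-/

open Matrix

namespace Matrix.PosSemidef

open scoped ComplexOrder

/-- The positive semidefinite square root of a positive semidefinite matrix, as defined in
Mathlib of December 2024 (removed since). -/
noncomputable def sqrt {n 𝕜 : Type*} [Fintype n] [RCLike 𝕜] [DecidableEq n]
    {A : Matrix n n 𝕜} (hA : PosSemidef A) : Matrix n n 𝕜 :=
  hA.1.eigenvectorUnitary.1 * diagonal ((↑) ∘ (√·) ∘ hA.1.eigenvalues) *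
  (star hA.1.eigenvectorUnitary : Matrix n n 𝕜)

end Matrix.PosSemidef

namespace Matrix

open scoped ComplexOrder

variable {m n 𝕜 : Type*} [Fintype m] [Fintype n] [RCLike 𝕜]

lemma eq_zero_of_posSemidef_neg_conjTranspose_mul_self {N : Matrix m n 𝕜}
    (h : (-(Nᴴ * N)).PosSemidef) : N = 0 := by
  have hle : (Nᴴ * N).trace ≤ 0 := by simpa only [trace_neg, neg_nonneg] using h.trace_nonneg
  exact trace_conjTranspose_mul_self_eq_zero_iff.mp
    (hle.antisymm (posSemidef_conjTranspose_mul_self N).trace_nonneg)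

lemma IsHermitian.posSemidef_of_isIdempotentElem {E : Matrix n n 𝕜} (hE : E.IsHermitian)
    (hEE : IsIdempotentElem E) : E.PosSemidef := by
  rw [← hEE.eq]
  nth_rewrite 1 [← hE]
  exact posSemidef_conjTranspose_mul_self E

variable [DecidableEq n]

namespace PosSemidef

variable {A : Matrix n n 𝕜} (hA : A.PosSemidef)
include hA

lemma sqrt_eq_cfc : hA.sqrt = cfc Real.sqrt A := by
  rw [hA.1.cfc_eq, IsHermitian.cfc, Unitary.conjStarAlgAut_apply]
  rfl

lemma isHermitian_sqrt : hA.sqrt.IsHermitian := by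
  rw [hA.sqrt_eq_cfc]
  exact cfc_predicate _ A

lemma sqrt_mul_sqrt : hA.sqrt * hA.sqrt = A := by
  conv_rhs => rw [← cfc_id' ℝ A hA.1.isSelfAdjoint]
  rw [hA.sqrt_eq_cfc, ← cfc_mul _ _ _ (A.finite_real_spectrum.continuousOn _)
    (A.finite_real_spectrum.continuousOn _)]
  refine cfc_congr fun x hx ↦ Real.mul_self_sqrt ?_
  obtain ⟨i, rfl⟩ := hA.1.spectrum_real_eq_range_eigenvalues ▸ hx
  exact hA.eigenvalues_nonneg i

end PosSemidef

/-- `T = cfc (·⁻¹) S` is the pseudoinverse of `S`: the convention `0⁻¹ = 0` makes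
`x * x⁻¹ * x = x` hold on the whole spectrum. -/
lemma IsHermitian.exists_isHermitian_commute_mul_mul_eq {S : Matrix n n 𝕜}
    (hS : S.IsHermitian) : ∃ T : Matrix n n 𝕜, T.IsHermitian ∧ Commute S T ∧ S * T * S = S := by
  have hfin := S.finite_real_spectrum
  have hid := cfc_id' ℝ S hS.isSelfAdjoint
  refine ⟨cfc (·⁻¹ : ℝ → ℝ) S, cfc_predicate _ S, ?_, ?_⟩
  · simpa only [hid] using cfc_commute_cfc (fun x : ℝ ↦ x) (·⁻¹) S
  · calc S * cfc (·⁻¹) S * S = cfc (fun x ↦ x * x⁻¹ * x) S := by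
          rw [cfc_mul _ _ _ (hfin.continuousOn _) (hfin.continuousOn _),
            cfc_mul _ _ _ (hfin.continuousOn _) (hfin.continuousOn _), hid]
      _ = S := by simp only [mul_inv_mul_cancel, hid]

theorem IsHermitian.exists_eq_mul_of_posSemidef_mul_self_sub {S : Matrix n n 𝕜}
    (hS : S.IsHermitian) {B : Matrix m n 𝕜} (h : (S * S - Bᴴ * B).PosSemidef) :
    ∃ Υ : Matrix m n 𝕜, (1 - Υᴴ * Υ).PosSemidef ∧ B = Υ * S := by
  obtain ⟨T, hT, hST, hSTS⟩ := hS.exists_isHermitian_commute_mul_mul_eq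
  have hproj : IsIdempotentElem (S * T) := by
    simp only [IsIdempotentElem, ← Matrix.mul_assoc, hSTS]
  have hcompl : (1 - S * T).IsHermitian := by
    simp only [IsHermitian, conjTranspose_sub, conjTranspose_one, conjTranspose_mul, hT.eq, hS.eq,
      hST.eq]
  have hS_compl : S * (1 - S * T) = 0 := by
    rw [Matrix.mul_sub, Matrix.mul_one, hST.eq, ← Matrix.mul_assoc, hSTS, sub_self]
  have hBP : B * (S * T) = B := by
    have hSS : (1 - S * T)ᴴ * (S * S) * (1 - S * T) = 0 :=
      calc _ = (S * (1 - S * T))ᴴ * (S * (1 - S * T)) := by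
            rw [conjTranspose_mul, hS.eq]; simp only [Matrix.mul_assoc]
        _ = 0 := by rw [hS_compl, Matrix.mul_zero]
    have hneg : (1 - S * T)ᴴ * (S * S - Bᴴ * B) * (1 - S * T) =
        -((B * (1 - S * T))ᴴ * (B * (1 - S * T))) := by
      rw [Matrix.mul_sub _ (S * S), Matrix.sub_mul _ _ (1 - S * T), hSS, zero_sub,
        conjTranspose_mul]
      simp only [Matrix.mul_assoc]
    have hB_compl := eq_zero_of_posSemidef_neg_conjTranspose_mul_self
      (hneg ▸ h.conjTranspose_mul_mul_same (1 - S * T))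
    rwa [Matrix.mul_sub, Matrix.mul_one, sub_eq_zero, eq_comm] at hB_compl
  refine ⟨B * T, ?_, ?_⟩
  · have hTSST : T * (S * S) * T = S * T :=
      calc T * (S * S) * T = (T * S) * (S * T) := by simp only [Matrix.mul_assoc]
        _ = S * T := by rw [← hST.eq, hproj.eq]
    have hsplit : 1 - (B * T)ᴴ * (B * T) = (1 - S * T) + Tᴴ * (S * S - Bᴴ * B) * T := by
      simp only [conjTranspose_mul, hT.eq, Matrix.mul_sub, Matrix.sub_mul, hTSST,
        Matrix.mul_assoc]
      abel
    rw [hsplit]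
    exact (hcompl.posSemidef_of_isIdempotentElem hproj.one_sub).add
      (h.conjTranspose_mul_mul_same T)
  · rw [Matrix.mul_assoc, ← hST.eq, hBP]

end Matrix

/-- if Zᵀ𝐀Z ⪯ 𝐐 with 𝐀 ≻ 0 and 𝐐 ⪰ 0, then
Z = 𝐀^{-1/2} 𝚼 𝐐^{1/2} for some 𝚼 with 𝚼ᵀ𝚼 ⪯ I. -/
theorem stmt_5 (p n : ℕ) (A : Matrix (Fin p) (Fin p) ℝ) (Q : Matrix (Fin n) (Fin n) ℝ)
    (hA : A.PosDef) (hQ : Q.PosSemidef) (Z : Matrix (Fin p) (Fin n) ℝ)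
    (h : (Q - Zᵀ * A * Z).PosSemidef) :
    ∃ Υ : Matrix (Fin p) (Fin n) ℝ,
      ((1 : Matrix (Fin n) (Fin n) ℝ) - Υᵀ * Υ).PosSemidef ∧
        Z = (hA.posSemidef.sqrt)⁻¹ * Υ * hQ.sqrt := by
  set R := hA.posSemidef.sqrt
  have hRR : R * R = A := hA.posSemidef.sqrt_mul_sqrt
  have hR : IsUnit R.det := by
    rw [← isUnit_iff_isUnit_det]
    exact isUnit_of_mul_isUnit_left (hRR ▸ hA.isUnit)
  have hRh : R.IsHermitian := hA.posSemidef.isHermitian_sqrt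
  have hRZ : (R * Z)ᴴ * (R * Z) = Zᵀ * A * Z := by
    rw [conjTranspose_mul, hRh.eq, conjTranspose_eq_transpose_of_trivial, ← hRR]
    simp only [Matrix.mul_assoc]
  obtain ⟨Υ, hΥ, hZ⟩ := hQ.isHermitian_sqrt.exists_eq_mul_of_posSemidef_mul_self_sub
    (B := R * Z) (by rwa [hQ.sqrt_mul_sqrt, hRZ])
  refine ⟨Υ, by rwa [conjTranspose_eq_transpose_of_trivial] at hΥ, ?_⟩
  rw [Matrix.mul_assoc, ← hZ, ← Matrix.mul_assoc, nonsing_inv_mul _ hR, Matrix.one_mul]
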